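/- For every n ≥ 1 and every x ≥ 0, the first moment of K_n^μ satisfies K_n^μ(ξ; x) = x + [ (e_μ(nx) − e_μ(−nx)) Q'(1) + e_μ(−nx) (Λ_μ Q)(1) ] / (Q(1) n e_μ(nx)), where K_n^μ(ξ;x) denotes K_n^μ applied to the identity function ξ ↦ ξ. -/

import Mathlib

/-!
With `[i]_μ = i + 2μθ_i` one has `γ_μ(i + 1) = [i + 1]_μ γ_μ(i)`, and `q_i(y) / γ_μ(i)` is the
`i`-th coefficient of the Cauchy product of `y^j / γ_μ(j)` with `c_k / γ_μ(k)`. Because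
`[j + k]_μ = [j]_μ + [k]_μ - 4μ θ_j θ_k`, the sum `Σ_i [i]_μ q_i(y) / γ_μ(i)` splits like a
Leibniz rule: `(Σ [j]_μ y^j / γ_μ(j)) Q(1) + e_μ(y) Σ [k]_μ c_k / γ_μ(k)` minus the parity
correction `4μ (Σ θ_j y^j / γ_μ(j)) (Σ θ_k c_k / γ_μ(k))`. Here `Σ [j]_μ y^j / γ_μ(j) = y e_μ(y)`,
`Σ [k]_μ c_k / γ_μ(k) = (Λ_μ Q)(1)`, and the odd parts are `(e_μ(y) - e_μ(-y)) / 2` and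
`(Q(1) - Q(-1)) / 2`; putting `y = nx` and dividing by `n Q(1) e_μ(nx)` gives the formula.
-/

open scoped BigOperators

/-- The Dunkl coefficients γ_μ(i). -/
noncomputable def gammaMu (μ : ℝ) (i : ℕ) : ℝ :=
  if Even i then
    2 ^ i * (Nat.factorial (i / 2)) *
      Real.Gamma (((i / 2 : ℕ) : ℝ) + μ + 1 / 2) / Real.Gamma (μ + 1 / 2)
  else
    2 ^ i * (Nat.factorial (i / 2)) *
      Real.Gamma (((i / 2 : ℕ) : ℝ) + μ + 3 / 2) / Real.Gamma (μ + 1 / 2)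

/-- θ_i = 0 if i is even, 1 if i is odd. -/
noncomputable def thetaFn (i : ℕ) : ℝ := if Even i then 0 else 1

/-- The Dunkl exponential e_μ(x) = Σ x^i / γ_μ(i). -/
noncomputable def dunklExp (μ : ℝ) (x : ℝ) : ℝ := ∑' i : ℕ, x ^ i / gammaMu μ i

/-- The Dunkl operator (Λ_μ f)(x) = f'(x) + μ (f(x) - f(-x)) / x. -/
noncomputable def dunklOp (μ : ℝ) (f : ℝ → ℝ) (x : ℝ) : ℝ :=
  deriv f x + μ * (f x - f (-x)) / x

/-- Q(t) = Σ c_i t^i / γ_μ(i). -/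
noncomputable def Qf (μ : ℝ) (c : ℕ → ℝ) (t : ℝ) : ℝ := ∑' i : ℕ, c i * t ^ i / gammaMu μ i

/-- The Dunkl–Appell polynomials q_i(x) = Σ_{j=0}^i (γ_μ(i)/(γ_μ(j)γ_μ(i-j))) c_{i-j} x^j. -/
noncomputable def qPoly (μ : ℝ) (c : ℕ → ℝ) (i : ℕ) (x : ℝ) : ℝ :=
  ∑ j ∈ Finset.range (i + 1),
    gammaMu μ i / (gammaMu μ j * gammaMu μ (i - j)) * c (i - j) * x ^ j

/-- The operators K_n^μ(f;x). -/
noncomputable def Kop (μ : ℝ) (c : ℕ → ℝ) (n : ℕ) (f : ℝ → ℝ) (x : ℝ) : ℝ :=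
  1 / (Qf μ c 1 * dunklExp μ (n * x)) *
    ∑' i : ℕ, qPoly μ c i (n * x) / gammaMu μ i * f (((i : ℝ) + 2 * μ * thetaFn i) / n)

open Finset

noncomputable def dunklNum (μ : ℝ) (i : ℕ) : ℝ := (i : ℝ) + 2 * μ * thetaFn i

noncomputable def dunklTerm (μ : ℝ) (c : ℕ → ℝ) (t : ℝ) (i : ℕ) : ℝ :=
  c i * t ^ i / gammaMu μ i

lemma thetaFn_eq (i : ℕ) : thetaFn i = (1 - (-1) ^ i) / 2 := by
  rcases Nat.even_or_odd i with h | h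
  · simp [thetaFn, h, h.neg_one_pow]
  · simp [thetaFn, Nat.not_even_iff_odd.mpr h, h.neg_one_pow]

lemma thetaFn_nonneg (i : ℕ) : 0 ≤ thetaFn i := by
  unfold thetaFn; split <;> norm_num

lemma thetaFn_le_one (i : ℕ) : thetaFn i ≤ 1 := by
  unfold thetaFn; split <;> norm_num

lemma dunklNum_add (μ : ℝ) (j k : ℕ) :
    dunklNum μ (j + k) = dunklNum μ j + dunklNum μ k - 4 * μ * (thetaFn j * thetaFn k) := by
  simp only [dunklNum, thetaFn_eq, pow_add]
  push_cast
  ring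

lemma abs_dunklNum_le (μ : ℝ) (i : ℕ) : |dunklNum μ i| ≤ (1 + 2 * |μ|) * 2 ^ i := by
  have hi : (i : ℝ) ≤ 2 ^ i := by exact_mod_cast i.lt_two_pow_self.le
  have hθ : thetaFn i ≤ 2 ^ i := (thetaFn_le_one i).trans (one_le_pow₀ one_le_two)
  calc |dunklNum μ i| ≤ i + 2 * |μ| * thetaFn i := by
        rw [dunklNum]
        refine (abs_add_le _ _).trans (add_le_add (abs_of_nonneg i.cast_nonneg).le ?_)
        rw [abs_mul, abs_mul, abs_two, abs_of_nonneg (thetaFn_nonneg i)]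
    _ ≤ (1 + 2 * |μ|) * 2 ^ i := by nlinarith [abs_nonneg μ]

lemma abs_dunklTerm_two_mul (μ : ℝ) (c : ℕ → ℝ) (t : ℝ) (i : ℕ) :
    |dunklTerm μ c (2 * t) i| = 2 ^ i * |dunklTerm μ c t i| := by
  simp only [dunklTerm, abs_div, abs_mul, mul_pow, abs_pow, abs_two]
  ring

lemma dunklTerm_sub_dunklTerm_neg (μ : ℝ) (c : ℕ → ℝ) (t : ℝ) (i : ℕ) :
    dunklTerm μ c t i - dunklTerm μ c (-t) i = 2 * (thetaFn i * dunklTerm μ c t i) := by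
  simp only [dunklTerm, thetaFn_eq, neg_pow t]
  ring

lemma Qf_eq_tsum_dunklTerm (μ : ℝ) (c : ℕ → ℝ) (t : ℝ) :
    Qf μ c t = ∑' i, dunklTerm μ c t i := rfl

lemma dunklExp_eq_Qf_one (μ : ℝ) : dunklExp μ = Qf μ 1 := by
  ext t
  simp [dunklExp, Qf]

section Gamma

variable {μ : ℝ}

lemma gammaMu_pos (hμ : 0 ≤ μ) (i : ℕ) : 0 < gammaMu μ i := by
  have h0 : 0 < Real.Gamma (μ + 1 / 2) := Real.Gamma_pos_of_pos (by linarith)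
  have hfac : (0 : ℝ) < (i / 2).factorial := by exact_mod_cast (i / 2).factorial_pos
  unfold gammaMu
  split
  · have := Real.Gamma_pos_of_pos (by positivity : (0 : ℝ) < ((i / 2 : ℕ) : ℝ) + μ + 1 / 2)
    positivity
  · have := Real.Gamma_pos_of_pos (by positivity : (0 : ℝ) < ((i / 2 : ℕ) : ℝ) + μ + 3 / 2)
    positivity

lemma gammaMu_zero (hμ : 0 ≤ μ) : gammaMu μ 0 = 1 := by
  have h : Real.Gamma (μ + 2⁻¹) ≠ 0 := (Real.Gamma_pos_of_pos (by positivity)).ne'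
  simp [gammaMu, h]

lemma gammaMu_succ (hμ : 0 ≤ μ) (i : ℕ) :
    gammaMu μ (i + 1) = dunklNum μ (i + 1) * gammaMu μ i := by
  have hΓ : Real.Gamma (μ + 1 / 2) ≠ 0 := (Real.Gamma_pos_of_pos (by linarith)).ne'
  rcases Nat.even_or_odd i with ⟨m, rfl⟩ | ⟨m, rfl⟩
  · have he : Even (m + m) := ⟨m, rfl⟩
    have ho : ¬Even (m + m + 1) := by simp [Nat.even_add_one, he]
    rw [gammaMu, gammaMu, if_neg ho, if_pos he, show (m + m + 1) / 2 = m by omega,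
      show (m + m) / 2 = m by omega, dunklNum, thetaFn, if_neg ho,
      show (m : ℝ) + μ + 3 / 2 = (m + μ + 1 / 2) + 1 by ring,
      Real.Gamma_add_one (by positivity)]
    push_cast
    field_simp
    ring
  · have ho : ¬Even (2 * m + 1) := by simp [parity_simps]
    have he : Even (2 * m + 1 + 1) := by simp [Nat.even_add_one, ho]
    rw [gammaMu, gammaMu, if_pos he, if_neg ho, show (2 * m + 1 + 1) / 2 = m + 1 by omega,
      show (2 * m + 1) / 2 = m by omega, dunklNum, thetaFn, if_pos he,
      show ((m + 1 : ℕ) : ℝ) + μ + 1 / 2 = m + μ + 3 / 2 by push_cast; ring,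
      Nat.factorial_succ]
    push_cast
    field_simp
    ring

lemma factorial_le_gammaMu (hμ : 0 ≤ μ) (i : ℕ) : (i.factorial : ℝ) ≤ gammaMu μ i := by
  induction i with
  | zero => simp [gammaMu_zero hμ]
  | succ k ih =>
    have hnum : ((k + 1 : ℕ) : ℝ) ≤ dunklNum μ (k + 1) := by
      have := thetaFn_nonneg (k + 1)
      unfold dunklNum
      nlinarith
    rw [gammaMu_succ hμ, Nat.factorial_succ, Nat.cast_mul]
    exact mul_le_mul hnum ih (by positivity) (by linarith)

end Gamma

section Cauchy

variable {u v : ℕ → ℝ}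

lemma summable_norm_of_summable_two_pow_mul (hu : Summable fun i => 2 ^ i * ‖u i‖) :
    Summable fun i => ‖u i‖ :=
  hu.of_nonneg_of_le (fun _ => norm_nonneg _)
    fun _ => le_mul_of_one_le_left (norm_nonneg _) (one_le_pow₀ one_le_two)

lemma summable_norm_mul_of_abs_le {w : ℕ → ℝ} (C : ℝ) (hw : ∀ i, |w i| ≤ C * 2 ^ i)
    (hu : Summable fun i => 2 ^ i * ‖u i‖) : Summable fun i => ‖w i * u i‖ :=
  (hu.mul_left C).of_nonneg_of_le (fun _ => norm_nonneg _) fun i => by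
    rw [norm_mul, Real.norm_eq_abs, ← mul_assoc]
    exact mul_le_mul_of_nonneg_right (hw i) (norm_nonneg _)

lemma summable_norm_dunklNum_mul (μ : ℝ) (hu : Summable fun i => 2 ^ i * ‖u i‖) :
    Summable fun i => ‖dunklNum μ i * u i‖ :=
  summable_norm_mul_of_abs_le _ (abs_dunklNum_le μ) hu

lemma summable_norm_thetaFn_mul (hu : Summable fun i => ‖u i‖) :
    Summable fun i => ‖thetaFn i * u i‖ :=
  hu.of_nonneg_of_le (fun _ => norm_nonneg _) fun i => by
    rw [norm_mul, Real.norm_of_nonneg (thetaFn_nonneg i)]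
    exact mul_le_of_le_one_left (norm_nonneg _) (thetaFn_le_one i)

theorem tsum_dunklNum_mul_sum_range_mul (μ : ℝ) (hu : Summable fun i => 2 ^ i * ‖u i‖)
    (hv : Summable fun i => 2 ^ i * ‖v i‖) :
    ∑' i, dunklNum μ i * ∑ j ∈ range (i + 1), u j * v (i - j) =
      (∑' i, dunklNum μ i * u i) * (∑' i, v i) + (∑' i, u i) * (∑' i, dunklNum μ i * v i)
        - 4 * μ * ((∑' i, thetaFn i * u i) * ∑' i, thetaFn i * v i) := by
  have hu' := summable_norm_of_summable_two_pow_mul hu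
  have hv' := summable_norm_of_summable_two_pow_mul hv
  have hsum := ((hasSum_sum_range_mul_of_summable_norm (summable_norm_dunklNum_mul μ hu) hv').add
    (hasSum_sum_range_mul_of_summable_norm hu' (summable_norm_dunklNum_mul μ hv))).sub
    ((hasSum_sum_range_mul_of_summable_norm (summable_norm_thetaFn_mul hu')
      (summable_norm_thetaFn_mul hv')).mul_left (4 * μ))
  refine HasSum.tsum_eq (hsum.congr_fun fun i => ?_)
  rw [mul_sum, mul_sum, ← sum_add_distrib, ← sum_sub_distrib]
  refine sum_congr rfl fun j hj => ?_
  obtain ⟨k, rfl⟩ := Nat.exists_eq_add_of_le (mem_range_succ_iff.mp hj)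
  rw [Nat.add_sub_cancel_left, dunklNum_add]
  ring

end Cauchy

section DunklSeries

variable {μ : ℝ} {c : ℕ → ℝ}

lemma summable_two_pow_mul_dunklTerm (hQ : ∀ t, Summable fun i => |dunklTerm μ c t i|)
    (t : ℝ) : Summable fun i => 2 ^ i * ‖dunklTerm μ c t i‖ := by
  simpa only [Real.norm_eq_abs, abs_dunklTerm_two_mul] using hQ (2 * t)

lemma Qf_sub_Qf_neg (hQ : ∀ t, Summable fun i => |dunklTerm μ c t i|) (t : ℝ) :
    Qf μ c t - Qf μ c (-t) = 2 * ∑' i, thetaFn i * dunklTerm μ c t i := by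
  rw [Qf_eq_tsum_dunklTerm, Qf_eq_tsum_dunklTerm, ← (hQ t).of_abs.tsum_sub (hQ (-t)).of_abs,
    ← tsum_mul_left]
  exact tsum_congr (dunklTerm_sub_dunklTerm_neg μ c t)

lemma summable_abs_dunklTerm_one (hμ : 0 ≤ μ) (t : ℝ) :
    Summable fun i => |dunklTerm μ 1 t i| := by
  refine (Real.summable_pow_div_factorial |t|).of_nonneg_of_le (fun _ => abs_nonneg _) fun i => ?_
  rw [dunklTerm, Pi.one_apply, one_mul, abs_div, abs_pow, abs_of_pos (gammaMu_pos hμ i)]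
  exact div_le_div_of_nonneg_left (by positivity) (by positivity) (factorial_le_gammaMu hμ i)

lemma dunklExp_pos (hμ : 0 ≤ μ) {y : ℝ} (hy : 0 ≤ y) : 0 < dunklExp μ y := by
  rw [dunklExp_eq_Qf_one]
  refine (summable_abs_dunklTerm_one hμ y).of_abs.tsum_pos
    (fun i => div_nonneg (by simp [hy]) (gammaMu_pos hμ i).le) 0 ?_
  simp [dunklTerm, gammaMu_zero hμ]

lemma tsum_dunklNum_mul_dunklTerm_one (hμ : 0 ≤ μ) (y : ℝ) :
    ∑' i, dunklNum μ i * dunklTerm μ 1 y i = y * dunklExp μ y := by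
  have hs : Summable fun i => dunklNum μ i * dunklTerm μ 1 y i :=
    (summable_norm_dunklNum_mul μ (summable_two_pow_mul_dunklTerm
      (summable_abs_dunklTerm_one hμ) y)).of_norm
  have hshift (i : ℕ) : dunklNum μ (i + 1) * dunklTerm μ 1 y (i + 1) = y * dunklTerm μ 1 y i := by
    have := (gammaMu_pos hμ i).ne'
    have : dunklNum μ (i + 1) ≠ 0 := by
      have := thetaFn_nonneg (i + 1)
      unfold dunklNum
      positivity
    simp only [dunklTerm, gammaMu_succ hμ, pow_succ, Pi.one_apply]
    field_simp
  rw [hs.tsum_eq_zero_add, tsum_congr hshift, tsum_mul_left, dunklExp_eq_Qf_one]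
  simp [dunklNum, thetaFn_eq, Qf, dunklTerm]

lemma hasDerivAt_Qf (hQ : ∀ t, Summable fun i => |dunklTerm μ c t i|) (t : ℝ) :
    HasDerivAt (Qf μ c) (∑' i, c i * (i * t ^ (i - 1)) / gammaMu μ i) t := by
  set R := |t| + 1
  have hR : 1 ≤ R := by simp [R]
  refine hasDerivAt_tsum_of_isPreconnected (t := Set.Ioo (-R) R) (hQ (2 * R)) isOpen_Ioo
    isPreconnected_Ioo
    (fun i s _ => ((hasDerivAt_pow i s).const_mul (c i)).div_const (gammaMu μ i))
    (fun i s hs => ?_) (y₀ := t) ?_ (hQ t).of_abs ?_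
  · have hs' : |s| ≤ R := abs_le.mpr ⟨hs.1.le, hs.2.le⟩
    have hpow : (i : ℝ) * |s| ^ (i - 1) ≤ (2 * R) ^ i := by
      rw [mul_pow]
      refine mul_le_mul (by exact_mod_cast i.lt_two_pow_self.le) ?_ (by positivity)
        (by positivity)
      exact (pow_le_pow_left₀ (abs_nonneg s) hs' _).trans
        (pow_le_pow_right₀ hR (Nat.sub_le i 1))
    rw [Real.norm_eq_abs, dunklTerm, abs_div, abs_div, abs_mul, abs_mul, abs_mul,
      Nat.abs_cast, abs_pow, abs_pow, abs_of_nonneg (by positivity : (0 : ℝ) ≤ 2 * R)]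
    gcongr
  all_goals exact ⟨by linarith [neg_abs_le t], by linarith [le_abs_self t]⟩

lemma dunklOp_Qf_one (hQ : ∀ t, Summable fun i => |dunklTerm μ c t i|) :
    dunklOp μ (Qf μ c) 1 = ∑' i, dunklNum μ i * dunklTerm μ c 1 i := by
  have hnat : Summable fun i : ℕ => (i : ℝ) * dunklTerm μ c 1 i :=
    (summable_norm_mul_of_abs_le (w := fun i : ℕ => (i : ℝ)) 1
      (fun i => by simpa using (Nat.cast_le (α := ℝ)).mpr i.lt_two_pow_self.le)
      (summable_two_pow_mul_dunklTerm hQ 1)).of_norm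
  have hθ : Summable fun i => thetaFn i * dunklTerm μ c 1 i :=
    (summable_norm_thetaFn_mul (summable_norm_of_summable_two_pow_mul
      (summable_two_pow_mul_dunklTerm hQ 1))).of_norm
  have hderiv : deriv (Qf μ c) 1 = ∑' i : ℕ, (i : ℝ) * dunklTerm μ c 1 i :=
    (hasDerivAt_Qf hQ 1).deriv.trans <| tsum_congr fun i => by
      simp only [dunklTerm, one_pow]
      ring
  rw [dunklOp, hderiv, Qf_sub_Qf_neg hQ, div_one, ← mul_assoc, ← tsum_mul_left,
    ← hnat.tsum_add (hθ.mul_left _)]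
  exact tsum_congr fun i => by rw [dunklNum]; ring

lemma qPoly_div_gammaMu (hμ : 0 ≤ μ) (i : ℕ) (y : ℝ) :
    qPoly μ c i y / gammaMu μ i =
      ∑ j ∈ range (i + 1), dunklTerm μ 1 y j * dunklTerm μ c 1 (i - j) := by
  rw [qPoly, sum_div]
  refine sum_congr rfl fun j _ => ?_
  have := (gammaMu_pos hμ i).ne'
  have := (gammaMu_pos hμ j).ne'
  have := (gammaMu_pos hμ (i - j)).ne'
  simp only [dunklTerm, Pi.one_apply, one_pow]
  field_simp

theorem tsum_qPoly_div_gammaMu_mul_dunklNum (hμ : 0 ≤ μ)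
    (hQ : ∀ t, Summable fun i => |dunklTerm μ c t i|) (y : ℝ) :
    ∑' i, qPoly μ c i y / gammaMu μ i * dunklNum μ i =
      y * dunklExp μ y * Qf μ c 1 + dunklExp μ y * dunklOp μ (Qf μ c) 1
        - μ * (dunklExp μ y - dunklExp μ (-y)) * (Qf μ c 1 - Qf μ c (-1)) := by
  have hE := summable_abs_dunklTerm_one hμ
  simp_rw [qPoly_div_gammaMu hμ, mul_comm _ (dunklNum μ _)]
  rw [tsum_dunklNum_mul_sum_range_mul μ (summable_two_pow_mul_dunklTerm hE y)
      (summable_two_pow_mul_dunklTerm hQ 1), tsum_dunklNum_mul_dunklTerm_one hμ,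
    ← dunklOp_Qf_one hQ, dunklExp_eq_Qf_one, Qf_sub_Qf_neg hE, Qf_sub_Qf_neg hQ,
    ← Qf_eq_tsum_dunklTerm, ← Qf_eq_tsum_dunklTerm]
  ring

end DunklSeries

theorem Kop_first_moment_general (μ : ℝ) (hμ : 0 ≤ μ) (c : ℕ → ℝ)
    (hQ : ∀ t : ℝ, Summable fun i : ℕ => |c i * t ^ i / gammaMu μ i|)
    (hQ1 : 0 < Qf μ c 1)
    (n : ℕ) (hn : 1 ≤ n) (x : ℝ) (hx : 0 ≤ x) :
    Kop μ c n (fun ξ => ξ) x =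
      x + ((dunklExp μ (n * x) - dunklExp μ (-(n * x))) * deriv (Qf μ c) 1 +
            dunklExp μ (-(n * x)) * dunklOp μ (Qf μ c) 1) /
          (Qf μ c 1 * n * dunklExp μ (n * x)) := by
  have hn0 : (n : ℝ) ≠ 0 := Nat.cast_ne_zero.mpr (by omega)
  have hE := (dunklExp_pos hμ (by positivity : (0 : ℝ) ≤ n * x)).ne'
  have hnodes : ∑' i, qPoly μ c i (n * x) / gammaMu μ i * (((i : ℝ) + 2 * μ * thetaFn i) / n) =
      (∑' i, qPoly μ c i (n * x) / gammaMu μ i * dunklNum μ i) / n := by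
    rw [← tsum_div_const]
    simp only [dunklNum, mul_div_assoc]
  rw [Kop, hnodes, tsum_qPoly_div_gammaMu_mul_dunklNum hμ hQ, dunklOp]
  field_simp [hQ1.ne']
  ring

/-- the first moment of K_n^μ. -/
theorem Kop_first_moment (μ : ℝ) (hμ : 0 ≤ μ) (c : ℕ → ℝ) (hc0 : c 0 ≠ 0)
    (hQ : ∀ t : ℝ, Summable fun i : ℕ => |c i * t ^ i / gammaMu μ i|)
    (hq : ∀ i : ℕ, ∀ x : ℝ, 0 ≤ x → 0 ≤ qPoly μ c i x)
    (hQ1 : 0 < Qf μ c 1)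
    (n : ℕ) (hn : 1 ≤ n) (x : ℝ) (hx : 0 ≤ x) :
    Kop μ c n (fun ξ => ξ) x =
      x + ((dunklExp μ (n * x) - dunklExp μ (-(n * x))) * deriv (Qf μ c) 1 +
            dunklExp μ (-(n * x)) * dunklOp μ (Qf μ c) 1) /
          (Qf μ c 1 * n * dunklExp μ (n * x)) :=
  Kop_first_moment_general μ hμ c hQ hQ1 n hn x hx
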